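/- arXiv:2408.05731 — 3 statements merged into one kernel-verified Lean document; each statement's English description precedes it below -/
import Mathlib

section
/- (Subfactor Projection Lemma, lower part) Let X⁻ be normal in the subgroup X⁺ of a group G, and Y⁻ ≤ Y⁺ subgroups of G. Then (((Y⁻ ⊓ X⁺) ⊔ X⁻) ⊓ Y⁺) ⊔ Y⁻ = (X⁻ ⊓ Y⁺) ⊔ Y⁻. -/
namespace Subgroup

variable {G : Type*} [Group G]

/-- Dedekind's modular law: since `A` normalizes `N`, `A ⊔ N` is the set product `A * N`. -/
theorem sup_inf_eq_sup_inf_of_le_normalizer {A N C : Subgroup G}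
    (hAN : A ≤ normalizer (N : Set G)) (hAC : A ≤ C) : (A ⊔ N) ⊓ C = A ⊔ (N ⊓ C) := by
  refine le_antisymm ?_ (le_inf (sup_le_sup_left inf_le_left A) (sup_le hAC inf_le_right))
  rw [← SetLike.coe_subset_coe, coe_inf, coe_mul_of_left_le_normalizer_right A N hAN,
    ← mul_inf_assoc A N C hAC]
  exact mul_subset (SetLike.coe_subset_coe.mpr le_sup_left)
    (SetLike.coe_subset_coe.mpr le_sup_right)

end Subgroup

open Subgroup in
theorem stmt_11 {G : Type*} [Group G] (Xm Xp Ym Yp : Subgroup G)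
    (hX : Xm ≤ Xp) (hXn : (Xm.subgroupOf Xp).Normal) (hY : Ym ≤ Yp) :
    (((Ym ⊓ Xp) ⊔ Xm) ⊓ Yp) ⊔ Ym = (Xm ⊓ Yp) ⊔ Ym := by
  have hXp : Xp ≤ normalizer (Xm : Set G) := le_normalizer_of_normal_subgroupOf hX
  rw [sup_inf_eq_sup_inf_of_le_normalizer (inf_le_right.trans hXp) (inf_le_left.trans hY),
    sup_comm (Ym ⊓ Xp), sup_assoc, sup_eq_right.mpr (inf_le_left : Ym ⊓ Xp ≤ Ym)]
end

section
/- (Subfactor Projection Lemma) Let X = (X⁻, X⁺) be a subfactor of G (X⁻ normal in X⁺) and Y = (Y⁻, Y⁺) any pair with Y⁻ ≤ Y⁺. Define ZW := (Z ⊓ W⁺) ⊔ W⁻ for a subgroup Z and pair W. Then the projection YX := (Y⁻X, Y⁺X) satisfies (YX)Y = XY componentwise, i.e., (Y⁻X)Y = X⁻Y and (Y⁺X)Y = X⁺Y. -/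
lemma aux_mem_sup {G : Type*} [Group G] {A Xm Xp : Subgroup G}
    (hA : A ≤ Xp) (hXm : Xm ≤ Xp) (hn : (Xm.subgroupOf Xp).Normal)
    {g : G} (hg : g ∈ A ⊔ Xm) : ∃ a ∈ A, ∃ m ∈ Xm, g = a * m := by
  have hmap : (A ⊔ Xm) = Subgroup.map Xp.subtype (A.subgroupOf Xp ⊔ Xm.subgroupOf Xp) := by
    rw [Subgroup.map_sup, Subgroup.subgroupOf_map_subtype, Subgroup.subgroupOf_map_subtype,
      inf_eq_left.2 hA, inf_eq_left.2 hXm]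
  rw [hmap] at hg
  obtain ⟨x, hx, rfl⟩ := hg
  haveI := hn
  have : x ∈ ((A.subgroupOf Xp ⊔ Xm.subgroupOf Xp : Subgroup Xp) : Set Xp) := hx
  rw [Subgroup.mul_normal] at this
  obtain ⟨a, ha, m, hm, rfl⟩ := this
  exact ⟨a, ha, m, hm, rfl⟩

lemma aux_key {G : Type*} [Group G] {A Xm Xp Yp : Subgroup G}
    (hA : A ≤ Xp) (hXm : Xm ≤ Xp) (hn : (Xm.subgroupOf Xp).Normal)
    (hAY : A ≤ Yp) : (A ⊔ Xm) ⊓ Yp = A ⊔ (Xm ⊓ Yp) := by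
  apply le_antisymm
  · rintro g ⟨hg1, hg2⟩
    obtain ⟨a, ha, m, hm, rfl⟩ := aux_mem_sup hA hXm hn hg1
    have hmY : m ∈ Yp := by
      have : a⁻¹ * (a * m) ∈ Yp := mul_mem (inv_mem (hAY ha)) hg2
      simpa using this
    exact mul_mem (Subgroup.mem_sup_left ha) (Subgroup.mem_sup_right ⟨hm, hmY⟩)
  · exact sup_le (le_inf le_sup_left hAY)
      (le_inf (inf_le_left.trans le_sup_right) inf_le_right)

theorem stmt_12 {G : Type*} [Group G] (Xm Xp Ym Yp : Subgroup G)
    (hX : Xm ≤ Xp) (hXn : (Xm.subgroupOf Xp).Normal) (hY : Ym ≤ Yp) :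
    (((Ym ⊓ Xp) ⊔ Xm) ⊓ Yp) ⊔ Ym = (Xm ⊓ Yp) ⊔ Ym ∧
    (((Yp ⊓ Xp) ⊔ Xm) ⊓ Yp) ⊔ Ym = (Xp ⊓ Yp) ⊔ Ym := by
  constructor
  · rw [aux_key inf_le_right hX hXn (inf_le_left.trans hY)]
    rw [sup_comm (Ym ⊓ Xp), sup_assoc]
    congr 1
    exact sup_eq_right.2 inf_le_left
  · rw [aux_key inf_le_right hX hXn inf_le_left]
    rw [sup_comm (Yp ⊓ Xp), sup_assoc]
    apply le_antisymm
    · refine sup_le ((le_inf (inf_le_left.trans hX) inf_le_right).trans le_sup_left)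
        (sup_le ((le_inf inf_le_right inf_le_left).trans le_sup_left) le_sup_right)
    · exact sup_le ((le_inf inf_le_right inf_le_left).trans (le_sup_left.trans le_sup_right))
        (le_sup_right.trans le_sup_right)
end

section
/- Let X = (X⁻, X⁺) be a subfactor of G. Then the projection YX = ((Y⁻ ⊓ X⁺) ⊔ X⁻, (Y⁺ ⊓ X⁺) ⊔ X⁻) of any subfactor Y = (Y⁻, Y⁺) in X is again a subfactor: (Y⁻ ⊓ X⁺) ⊔ X⁻ is normal in (Y⁺ ⊓ X⁺) ⊔ X⁻. -/
/-! For `A ≤ B`, `A` is normal in `B` exactly when `B ≤ normalizer A`, and normalizers are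
compatible with lattice operations: `N(A) ⊓ N(K) ≤ N(A ⊓ K)` and `N(A) ⊓ N(N) ≤ N(A ⊔ N)`.
Intersecting `Y` with `X⁺` therefore gives a subfactor, and joining it with `X⁻`, which is
normalized by `X⁺ ⊇ Y⁺ ⊓ X⁺`, gives another. -/

namespace Subgroup

variable {G : Type*} [Group G] {A B : Subgroup G}

theorem normal_subgroupOf_inf_right (K : Subgroup G) (hAB : A ≤ B)
    (hA : (A.subgroupOf B).Normal) : ((A ⊓ K).subgroupOf (B ⊓ K)).Normal := by
  rw [normal_subgroupOf_iff_le_normalizer (inf_le_inf_right K hAB)]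
  exact (inf_le_inf ((normal_subgroupOf_iff_le_normalizer hAB).1 hA) le_normalizer).trans
    inf_normalizer_le_normalizer_inf

theorem normal_subgroupOf_sup_right {N : Subgroup G} (hAB : A ≤ B)
    (hA : (A.subgroupOf B).Normal) (hN : B ≤ normalizer N) :
    ((A ⊔ N).subgroupOf (B ⊔ N)).Normal := by
  rw [normal_subgroupOf_iff_le_normalizer (sup_le_sup_right hAB N)]
  refine sup_le ?_ (le_sup_right.trans le_normalizer)
  exact (le_inf ((normal_subgroupOf_iff_le_normalizer hAB).1 hA) hN).trans
    (normalizer_inf_normalizer_le_normalizer_sup A N)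

end Subgroup

theorem stmt_13 {G : Type*} [Group G] (Xm Xp Ym Yp : Subgroup G)
    (hX : Xm ≤ Xp) (hXn : (Xm.subgroupOf Xp).Normal)
    (hY : Ym ≤ Yp) (hYn : (Ym.subgroupOf Yp).Normal) :
    (Ym ⊓ Xp) ⊔ Xm ≤ (Yp ⊓ Xp) ⊔ Xm ∧
    (((Ym ⊓ Xp) ⊔ Xm).subgroupOf ((Yp ⊓ Xp) ⊔ Xm)).Normal := by
  have hYX : Ym ⊓ Xp ≤ Yp ⊓ Xp := inf_le_inf_right Xp hY
  have hXm : Yp ⊓ Xp ≤ Subgroup.normalizer (Xm : Set G) :=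
    inf_le_right.trans ((Subgroup.normal_subgroupOf_iff_le_normalizer hX).1 hXn)
  exact ⟨sup_le_sup_right hYX Xm,
    Subgroup.normal_subgroupOf_sup_right hYX (Subgroup.normal_subgroupOf_inf_right Xp hY hYn) hXm⟩
end
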